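/- Let p > 0. At any point (z, 0) of the ellipsoid E = {(z,w) : |z|² + |w|^{2p} < 1} with z real, the determinant of the Bergman metric of E equals det g = 2(2p+1)(p²+3p+2)·(1 - z²)^{-1/p} / (p·(p+1)²·(1 - z²)²). -/

import Mathlib

noncomputable section

/-- The Bergman kernel of `E(1,1,p)` (D'Angelo's formula), polarized as a holomorphic
function of independent complex variables `z, z̄, w, w̄`:
`K = c₁ φ^{-2+1/p} ψ^{-2} + c₂ φ^{-2+2/p} ψ^{-3}` with `φ = 1 - z z̄`,
`ψ = φ^{1/p} - w w̄`, `c₁ = (p-1)/(pπ²)`, `c₂ = 2/(pπ²)`. -/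
def Kc (p : ℝ) (z zb w wb : ℂ) : ℂ :=
  (((p - 1) / (p * Real.pi ^ 2) : ℝ) : ℂ) * (1 - z * zb) ^ ((-2 + 1 / p : ℝ) : ℂ)
      * ((1 - z * zb) ^ ((1 / p : ℝ) : ℂ) - w * wb) ^ (-2 : ℂ)
    + ((2 / (p * Real.pi ^ 2) : ℝ) : ℂ) * (1 - z * zb) ^ ((-2 + 2 / p : ℝ) : ℂ)
      * ((1 - z * zb) ^ ((1 / p : ℝ) : ℂ) - w * wb) ^ (-3 : ℂ)

/-- Wirtinger derivative `∂/∂z` (first slot). -/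
def D1 (F : ℂ → ℂ → ℂ → ℂ → ℂ) : ℂ → ℂ → ℂ → ℂ → ℂ :=
  fun z zb w wb => deriv (fun t => F t zb w wb) z

/-- Wirtinger derivative `∂/∂z̄` (second slot). -/
def D1b (F : ℂ → ℂ → ℂ → ℂ → ℂ) : ℂ → ℂ → ℂ → ℂ → ℂ :=
  fun z zb w wb => deriv (fun t => F z t w wb) zb

/-- Wirtinger derivative `∂/∂w` (third slot). -/
def D2 (F : ℂ → ℂ → ℂ → ℂ → ℂ) : ℂ → ℂ → ℂ → ℂ → ℂ :=
  fun z zb w wb => deriv (fun t => F z zb t wb) w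

/-- Wirtinger derivative `∂/∂w̄` (fourth slot). -/
def D2b (F : ℂ → ℂ → ℂ → ℂ → ℂ) : ℂ → ℂ → ℂ → ℂ → ℂ :=
  fun z zb w wb => deriv (fun t => F z zb w t) wb

/-- `log K`. -/
def logK (p : ℝ) : ℂ → ℂ → ℂ → ℂ → ℂ :=
  fun z zb w wb => Complex.log (Kc p z zb w wb)

/-- Bergman metric component `g_{1 1̄} = ∂² log K / ∂z ∂z̄`. -/
def g11 (p : ℝ) : ℂ → ℂ → ℂ → ℂ → ℂ := D1 (D1b (logK p))

/-- Bergman metric component `g_{1 2̄} = ∂² log K / ∂z ∂w̄`. -/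
def g12 (p : ℝ) : ℂ → ℂ → ℂ → ℂ → ℂ := D1 (D2b (logK p))

/-- Bergman metric component `g_{2 1̄} = ∂² log K / ∂w ∂z̄`. -/
def g21 (p : ℝ) : ℂ → ℂ → ℂ → ℂ → ℂ := D2 (D1b (logK p))

/-- Bergman metric component `g_{2 2̄} = ∂² log K / ∂w ∂w̄`. -/
def g22 (p : ℝ) : ℂ → ℂ → ℂ → ℂ → ℂ := D2 (D2b (logK p))

/-- `det g = g_{1 1̄} g_{2 2̄} - g_{1 2̄} g_{2 1̄}`. -/
def detg (p : ℝ) : ℂ → ℂ → ℂ → ℂ → ℂ :=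
  fun z zb w wb => g11 p z zb w wb * g22 p z zb w wb - g12 p z zb w wb * g21 p z zb w wb

/-- `Ric_{1 1̄} = -∂² log det g / ∂z ∂z̄`. -/
def Ric11 (p : ℝ) : ℂ → ℂ → ℂ → ℂ → ℂ :=
  fun z zb w wb =>
    -(D1 (D1b fun a b c d => Complex.log (detg p a b c d)) z zb w wb)

/-- `Ric_{1 2̄}`. -/
def Ric12 (p : ℝ) : ℂ → ℂ → ℂ → ℂ → ℂ :=
  fun z zb w wb =>
    -(D1 (D2b fun a b c d => Complex.log (detg p a b c d)) z zb w wb)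

/-- `Ric_{2 1̄}`. -/
def Ric21 (p : ℝ) : ℂ → ℂ → ℂ → ℂ → ℂ :=
  fun z zb w wb =>
    -(D2 (D1b fun a b c d => Complex.log (detg p a b c d)) z zb w wb)

/-- `Ric_{2 2̄}`. -/
def Ric22 (p : ℝ) : ℂ → ℂ → ℂ → ℂ → ℂ :=
  fun z zb w wb =>
    -(D2 (D2b fun a b c d => Complex.log (detg p a b c d)) z zb w wb)

/-! At `w = w̄ = 0` the two terms of the kernel collapse to
`K = (p+1)/(pπ²) · (1 - z z̄)^{-2-1/p}`, so `g_{1 1̄} = (2 + 1/p)/(1 - z z̄)²`. The kernel depends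
on `w, w̄` only through `w w̄`, so the mixed components vanish there, while `∂_{w̄} log K` is linear
in `w` with slope `(2c₁ + 3c₂)/((c₁ + c₂) ψ)`, `ψ = (1 - z z̄)^{1/p}`; this gives
`g_{2 2̄} = 2(p+2)/((p+1) ψ)`, and the determinant is the product of the diagonal entries. -/

open Complex Filter Topology

/-- With `ψ = (1 - z z̄)^{1/p}` pulled out and its powers made integral, `w ↦ K` can be
differentiated with no branch condition on `ψ - w w̄`. -/
lemma Kc_eq_zpow (p : ℝ) {z zb : ℂ} (w wb : ℂ) (hφ : 1 - z * zb ≠ 0) :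
    Kc p z zb w wb =
      ((((p - 1) / (p * Real.pi ^ 2) : ℝ) : ℂ) * (1 - z * zb) ^ ((1 / p : ℝ) : ℂ)
          * ((1 - z * zb) ^ ((1 / p : ℝ) : ℂ) - w * wb) ^ (-2 : ℤ)
        + ((2 / (p * Real.pi ^ 2) : ℝ) : ℂ) * ((1 - z * zb) ^ ((1 / p : ℝ) : ℂ)) ^ 2
          * ((1 - z * zb) ^ ((1 / p : ℝ) : ℂ) - w * wb) ^ (-3 : ℤ)) / (1 - z * zb) ^ 2 := by
  have hexp₁ : ((-2 + 1 / p : ℝ) : ℂ) = -2 + ((1 / p : ℝ) : ℂ) := by push_cast; ring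
  have hexp₂ : ((-2 + 2 / p : ℝ) : ℂ) = -2 + (2 : ℕ) * ((1 / p : ℝ) : ℂ) := by push_cast; ring
  rw [Kc, hexp₁, hexp₂, cpow_add _ _ hφ, cpow_add _ _ hφ, cpow_nat_mul,
    show (-2 : ℂ) = ((-2 : ℤ) : ℂ) by norm_num, show (-3 : ℂ) = ((-3 : ℤ) : ℂ) by norm_num,
    cpow_intCast, cpow_intCast, cpow_intCast]
  simp only [zpow_neg, zpow_ofNat]
  ring

lemma Kc_zero_zero (p : ℝ) {z zb : ℂ} (hφ : 1 - z * zb ≠ 0) :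
    Kc p z zb 0 0 =
      (((p + 1) / (p * Real.pi ^ 2) : ℝ) : ℂ) * (1 - z * zb) ^ ((-2 - 1 / p : ℝ) : ℂ) := by
  have hexp : ((-2 - 1 / p : ℝ) : ℂ) = -((2 : ℕ) : ℂ) - ((1 / p : ℝ) : ℂ) := by push_cast; ring
  have hcoeff : (((p + 1) / (p * Real.pi ^ 2) : ℝ) : ℂ)
      = (((p - 1) / (p * Real.pi ^ 2) : ℝ) : ℂ) + ((2 / (p * Real.pi ^ 2) : ℝ) : ℂ) := by
    rw [← ofReal_add, ← add_div]; ring_nf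
  have hq : (1 - z * zb) ^ ((1 / p : ℝ) : ℂ) ≠ 0 := by simp [cpow_eq_zero_iff, hφ]
  rw [Kc_eq_zpow p 0 0 hφ, hexp, cpow_sub _ _ hφ, cpow_neg, cpow_natCast, hcoeff]
  simp only [mul_zero, sub_zero, zpow_neg, zpow_ofNat]
  field_simp

lemma g12_zero_zero (p : ℝ) (z zb : ℂ) : g12 p z zb 0 0 = 0 := by
  have hconst (t : ℂ) : deriv (fun s => logK p t zb 0 s) 0 = 0 := by
    simp only [logK, Kc, zero_mul, deriv_const]
  simp only [g12, D1, D2b, hconst, deriv_const]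

lemma g21_zero_zero (p : ℝ) (z zb : ℂ) : g21 p z zb 0 0 = 0 := by
  have hconst (t : ℂ) : (fun s => logK p z s t 0) = fun s => logK p z s 0 0 := by
    funext s; simp only [logK, Kc, mul_zero]
  simp only [g21, D2, D1b, hconst, deriv_const]

lemma D1b_logK_zero_zero (p : ℝ) {t s : ℂ} (hφ : 1 - t * s ∈ slitPlane)
    (hK : Kc p t s 0 0 ∈ slitPlane) :
    D1b (logK p) t s 0 0 = (2 + 1 / p) * t / (1 - t * s) := by
  set C : ℂ := (((p + 1) / (p * Real.pi ^ 2) : ℝ) : ℂ)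
  set b : ℂ := ((-2 - 1 / p : ℝ) : ℂ) with hb
  have hK₀ (s' : ℂ) (hs' : 1 - t * s' ≠ 0) : Kc p t s' 0 0 = C * (1 - t * s') ^ b :=
    Kc_zero_zero p hs'
  clear_value C
  have hφ₀ : 1 - t * s ≠ 0 := slitPlane_ne_zero hφ
  have hKeq : (fun s' => Kc p t s' 0 0) =ᶠ[𝓝 s] fun s' => C * (1 - t * s') ^ b := by
    have hcont : ContinuousAt (fun s' : ℂ => 1 - t * s') s := by fun_prop
    filter_upwards [hcont.eventually_ne hφ₀] with s' hs' using hK₀ s' hs'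
  have hderiv :
      HasDerivAt (fun s' => Kc p t s' 0 0) (C * (b * (1 - t * s) ^ (b - 1) * -t)) s := by
    refine (HasDerivAt.const_mul C ?_).congr_of_eventuallyEq hKeq
    exact ((hasDerivAt_id s).const_mul t).const_sub 1 |>.cpow_const hφ |>.congr_deriv (by simp)
  obtain ⟨hC, hpow⟩ : C ≠ 0 ∧ (1 - t * s) ^ b ≠ 0 :=
    mul_ne_zero_iff.mp (hK₀ s hφ₀ ▸ slitPlane_ne_zero hK)
  rw [D1b, show (fun s' => logK p t s' 0 0) = fun s' => log (Kc p t s' 0 0) from rfl,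
    (hderiv.clog hK).deriv, hK₀ s hφ₀, cpow_sub _ _ hφ₀, cpow_one]
  field_simp
  rw [hb]
  push_cast
  ring

lemma continuousAt_Kc_zero_zero (p : ℝ) {z zb : ℂ} (hφ : 1 - z * zb ∈ slitPlane) :
    ContinuousAt (fun t => Kc p t zb 0 0) z := by
  have hcont : ContinuousAt (fun t : ℂ => 1 - t * zb) z := by fun_prop
  have hKeq : (fun t => Kc p t zb 0 0) =ᶠ[𝓝 z] fun t =>
      (((p + 1) / (p * Real.pi ^ 2) : ℝ) : ℂ) * (1 - t * zb) ^ ((-2 - 1 / p : ℝ) : ℂ) := by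
    filter_upwards [hcont.eventually_ne (slitPlane_ne_zero hφ)] with t ht using Kc_zero_zero p ht
  exact (continuousAt_const.mul (hcont.cpow continuousAt_const hφ)).congr hKeq.symm

lemma g11_zero_zero (p : ℝ) {z zb : ℂ} (hφ : 1 - z * zb ∈ slitPlane)
    (hK : Kc p z zb 0 0 ∈ slitPlane) :
    g11 p z zb 0 0 = (2 + 1 / p) / (1 - z * zb) ^ 2 := by
  have hcont : ContinuousAt (fun t : ℂ => 1 - t * zb) z := by fun_prop
  have hD1b : (fun t => D1b (logK p) t zb 0 0) =ᶠ[𝓝 z]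
      fun t => (2 + 1 / p) * t / (1 - t * zb) := by
    filter_upwards [hcont.eventually_mem (isOpen_slitPlane.mem_nhds hφ),
      (continuousAt_Kc_zero_zero p hφ).eventually_mem (isOpen_slitPlane.mem_nhds hK)]
      with t hφt hKt using D1b_logK_zero_zero p hφt hKt
  have hderiv : HasDerivAt (fun t => (2 + 1 / p) * t / (1 - t * zb))
      ((2 + 1 / p) / (1 - z * zb) ^ 2) z := by
    have hφ₀ := slitPlane_ne_zero hφ
    refine (((hasDerivAt_id' z).const_mul _).div
      ((hasDerivAt_mul_const zb).const_sub 1) hφ₀).congr_deriv ?_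
    ring
  rw [g11, D1, (hderiv.congr_of_eventuallyEq hD1b).deriv]

lemma hasDerivAt_Kc_wb (p : ℝ) {z zb : ℂ} (t : ℂ) (hp : p + 1 ≠ 0) (hφ : 1 - z * zb ≠ 0) :
    HasDerivAt (fun s => Kc p z zb t s)
      (t * ((2 * p + 4) / (p + 1) / (1 - z * zb) ^ ((1 / p : ℝ) : ℂ)) * Kc p z zb 0 0) 0 := by
  have hcoeff : 2 * (((p - 1) / (p * Real.pi ^ 2) : ℝ) : ℂ) + 3 * ((2 / (p * Real.pi ^ 2) : ℝ) : ℂ)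
      = (2 * p + 4) / (p + 1)
        * ((((p - 1) / (p * Real.pi ^ 2) : ℝ) : ℂ) + ((2 / (p * Real.pi ^ 2) : ℝ) : ℂ)) := by
    have hreal : 2 * ((p - 1) / (p * Real.pi ^ 2)) + 3 * (2 / (p * Real.pi ^ 2))
        = (2 * p + 4) / (p + 1) * ((p - 1) / (p * Real.pi ^ 2) + 2 / (p * Real.pi ^ 2)) := by
      simp only [div_eq_mul_inv (b := p * Real.pi ^ 2)]
      field_simp
      ring
    exact_mod_cast hreal
  simp_rw [Kc_eq_zpow p _ _ hφ]
  set q := (1 - z * zb) ^ ((1 / p : ℝ) : ℂ)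
  have hq : q ≠ 0 := by simp [q, cpow_eq_zero_iff, hφ]
  have hψ (n : ℤ) : HasDerivAt (fun s => (q - t * s) ^ n) (n * q ^ (n - 1) * -t) 0 := by
    have := (hasDerivAt_zpow n (q - t * 0) (Or.inl (by simpa using hq))).comp 0
      (((hasDerivAt_id' 0).const_mul t).const_sub q)
    simp only [mul_zero, sub_zero, mul_one] at this
    exact this.congr_deriv (by ring)
  refine (((hψ (-2)).const_mul _).add ((hψ (-3)).const_mul _)).div_const _ |>.congr_deriv ?_
  simp only [mul_zero, sub_zero, zpow_neg, Int.reduceSub, Int.cast_neg, Int.cast_ofNat]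
  field_simp
  linear_combination t * hcoeff

lemma D2b_logK_zero (p : ℝ) {z zb : ℂ} (t : ℂ) (hp : p + 1 ≠ 0) (hφ : 1 - z * zb ≠ 0)
    (hK : Kc p z zb 0 0 ∈ slitPlane) :
    D2b (logK p) z zb t 0 = t * ((2 * p + 4) / (p + 1) / (1 - z * zb) ^ ((1 / p : ℝ) : ℂ)) := by
  have hK_t : Kc p z zb t 0 = Kc p z zb 0 0 := by simp only [Kc, mul_zero]
  rw [D2b, show (fun s => logK p z zb t s) = fun s => log (Kc p z zb t s) from rfl,
    ((hasDerivAt_Kc_wb p t hp hφ).clog (hK_t ▸ hK)).deriv, hK_t,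
    mul_div_cancel_right₀ _ (slitPlane_ne_zero hK)]

lemma g22_zero_zero (p : ℝ) {z zb : ℂ} (hp : p + 1 ≠ 0) (hφ : 1 - z * zb ≠ 0)
    (hK : Kc p z zb 0 0 ∈ slitPlane) :
    g22 p z zb 0 0 = (2 * p + 4) / (p + 1) / (1 - z * zb) ^ ((1 / p : ℝ) : ℂ) := by
  simp only [g22, D2, D2b_logK_zero p _ hp hφ hK]
  exact (hasDerivAt_id' 0).mul_const _ |>.deriv.trans (one_mul _)

/-- Determinant of the Bergman metric of `E(1,1,p)` at `(z,0)` with `z` real: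
`det g = 2(2p+1)(p²+3p+2)(1-z²)^{-1/p}/(p(p+1)²(1-z²)²)`. -/
theorem stmt_5 (p : ℝ) (hp : 0 < p) (z : ℝ) (hz : z ^ 2 < 1) :
    detg p (z : ℂ) (z : ℂ) 0 0 =
      ((2 * (2 * p + 1) * (p ^ 2 + 3 * p + 2) * (1 - z ^ 2) ^ (-(1 / p)) /
          (p * (p + 1) ^ 2 * (1 - z ^ 2) ^ 2) : ℝ) : ℂ) := by
  have hr : 0 < 1 - z ^ 2 := by linarith
  have hφ : 1 - (z : ℂ) * z = ((1 - z ^ 2 : ℝ) : ℂ) := by push_cast; ring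
  have hφ_slit : 1 - (z : ℂ) * z ∈ slitPlane := hφ ▸ ofReal_mem_slitPlane.mpr hr
  have hK : Kc p z z 0 0 ∈ slitPlane := by
    rw [Kc_zero_zero p (slitPlane_ne_zero hφ_slit), hφ, ← ofReal_cpow hr.le, ← ofReal_mul]
    exact ofReal_mem_slitPlane.mpr (by positivity)
  rw [detg, g11_zero_zero p hφ_slit hK,
    g22_zero_zero p (by positivity) (slitPlane_ne_zero hφ_slit) hK, g12_zero_zero,
    g21_zero_zero, hφ, ← ofReal_cpow hr.le, Real.rpow_neg hr.le]
  have hq : 0 < (1 - z ^ 2) ^ (1 / p) := by positivity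
  generalize (1 - z ^ 2) ^ (1 / p) = q at hq ⊢
  have hreal : (2 + 1 / p) / (1 - z ^ 2) ^ 2 * ((2 * p + 4) / (p + 1) / q)
      = 2 * (2 * p + 1) * (p ^ 2 + 3 * p + 2) * q⁻¹ / (p * (p + 1) ^ 2 * (1 - z ^ 2) ^ 2) := by
    field_simp
    ring
  rw [mul_zero, sub_zero]
  exact_mod_cast hreal
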